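/- arXiv:1309.2201 — 3 statements merged into one kernel-verified Lean document; each statement's English description precedes it below -/
import Mathlib

section
/- Let G be a connected simple graph on vertices {0,...,n} with root r. For each d ≥ 0, the number of parking functions of G of degree d equals the number of spanning trees T of G rooted at r with κ(G,T) = g - d, where g = |E| - |V| + 1. -/
open Finset

namespace PFG

variable {n : ℕ}

/-- `deg_{Sᶜ}(i)`: the number of edges `{i,j}` of `G` with `j ∉ S`. -/
noncomputable def sDeg (G : SimpleGraph (Fin (n+1))) (S : Finset (Fin (n+1))) (i : Fin (n+1)) : ℕ :=
  Set.ncard {j : Fin (n+1) | G.Adj i j ∧ j ∉ S}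

/-- `P` is a parking function for `G` with respect to the root `r`:
for every nonempty `S ⊆ V \ {r}` there is `i ∈ S` with `P i < deg_{Sᶜ}(i)`. -/
def IsParkingFunction (G : SimpleGraph (Fin (n+1))) (r : Fin (n+1))
    (P : Fin (n+1) → ℕ) : Prop :=
  ∀ S : Finset (Fin (n+1)), S.Nonempty → r ∉ S → ∃ i ∈ S, P i < sDeg G S i

/-- The degree of a parking function: the sum of its values over non-root vertices. -/
def degPF (r : Fin (n+1)) (P : Fin (n+1) → ℕ) : ℕ := ∑ v ∈ univ.erase r, P v

/-- A spanning tree of `G` rooted at `r`, encoded by its parent function: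
each non-root vertex is adjacent (in `G`) to its parent, and iterating
the parent map from any vertex reaches the root. -/
structure RootedSpanningTree (G : SimpleGraph (Fin (n+1))) (r : Fin (n+1)) where
  parent : Fin (n+1) → Fin (n+1)
  parent_root : parent r = r
  adj_parent : ∀ v, v ≠ r → G.Adj (parent v) v
  reaches_root : ∀ v, ∃ k, parent^[k] v = r

/-- `i` is a (proper) ancestor of `j` in the rooted tree with parent map `par`. -/
def IsAncestor (par : Fin (n+1) → Fin (n+1)) (i j : Fin (n+1)) : Prop :=
  ∃ k, 0 < k ∧ par^[k] j = i

/-- An inversion: `i` is an ancestor of `j` and `i > j`. -/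
def IsInversion (par : Fin (n+1) → Fin (n+1)) (i j : Fin (n+1)) : Prop :=
  IsAncestor par i j ∧ j < i

/-- A κ-inversion: an inversion `(i,j)` such that moreover `i` is not the
root and the parent of `i` is adjacent to `j` in `G`. -/
def IsKappaInversion (G : SimpleGraph (Fin (n+1))) (r : Fin (n+1))
    (par : Fin (n+1) → Fin (n+1)) (i j : Fin (n+1)) : Prop :=
  IsAncestor par i j ∧ j < i ∧ i ≠ r ∧ G.Adj (par i) j

/-- the κ-number: the number of κ-inversions. -/
noncomputable def kappaNum (G : SimpleGraph (Fin (n+1))) (r : Fin (n+1))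
    (par : Fin (n+1) → Fin (n+1)) : ℕ :=
  Set.ncard {p : Fin (n+1) × Fin (n+1) | IsKappaInversion G r par p.1 p.2}

/-- the number of inversions. -/
noncomputable def invNum (par : Fin (n+1) → Fin (n+1)) : ℕ :=
  Set.ncard {p : Fin (n+1) × Fin (n+1) | IsInversion par p.1 p.2}

open Classical in
/-- The neighbors of `i` in `G`, listed in decreasing order. -/
noncomputable def nbrs (G : SimpleGraph (Fin (n+1))) (i : Fin (n+1)) : List (Fin (n+1)) :=
  ((univ.filter (fun j => G.Adj i j)).sort (· ≤ ·)).reverse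

/-- One step of depth-first search from vertex `i`: scan the neighbors of `i`
in decreasing order; each unvisited neighbor `j` is visited, gets parent `i`,
and the search recurses from `j`.  The state is the pair
(visited vertices, parent map). -/
noncomputable def dfsStep (G : SimpleGraph (Fin (n+1))) :
    ℕ → Fin (n+1) → Finset (Fin (n+1)) × (Fin (n+1) → Fin (n+1)) →
      Finset (Fin (n+1)) × (Fin (n+1) → Fin (n+1))
  | 0, _, st => st
  | (fuel+1), i, st =>
      (nbrs G i).foldl
        (fun st j =>
          if j ∈ st.1 then st
          else dfsStep G fuel j (insert j st.1, Function.update st.2 j i)) st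

/-- The parent map of the depth-first search tree of `G` rooted at `r`,
visiting neighbors in decreasing numerical order. -/
noncomputable def dfsParent (G : SimpleGraph (Fin (n+1))) (r : Fin (n+1)) :
    Fin (n+1) → Fin (n+1) :=
  (dfsStep G (n+1) r ({r}, fun _ => r)).2

/-- The set of edges of the rooted tree given by parent map `par`. -/
def treeEdges (r : Fin (n+1)) (par : Fin (n+1) → Fin (n+1)) : Set (Sym2 (Fin (n+1))) :=
  {e | ∃ v, v ≠ r ∧ e = s(par v, v)}

end PFG

/-!
Run a depth-first "burning" process on `G` from `r`: the vertex on top of a stack scans its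
neighbours in decreasing order; a scanned neighbour that is not yet burnt is either burnt (it
becomes a child of the scanning vertex and is pushed on the stack) or has its counter raised by
one. Which of the two happens is decided by a rule. With the rule "burn `j` from its parent in
`T`" a spanning tree `T` is rebuilt, and the final counters form a parking function `P_T`; with
the rule "burn `j` once its counter reaches `P j`" a parking function `P` is reproduced, together
with a spanning tree. The two runs coincide step by step, so `T ↦ P_T` is a bijection.

Every ordered pair `(x, y)` of adjacent vertices is scanned exactly once, from `x`. The pairs
with `y` burnt after `x` split into the `n` tree edges, the `deg P` counting scans, and the scans
of an already burnt `y`; the last ones are in bijection with the κ-inversions `(c, y)` through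
`(c, y) ↦ (parent c, y)`. Since these pairs make up half of the `2 |E|` ordered pairs,
`|E| = n + deg P + κ(G, T)`.
-/

open Function

namespace PFG

variable {n : ℕ}

lemma mem_nbrs {G : SimpleGraph (Fin (n+1))} {x y : Fin (n+1)} :
    y ∈ nbrs G x ↔ G.Adj x y := by
  classical
  simp [nbrs]

lemma nbrs_nodup (G : SimpleGraph (Fin (n+1))) (x : Fin (n+1)) : (nbrs G x).Nodup := by
  classical
  rw [nbrs, List.nodup_reverse]
  exact Finset.sort_nodup _ _

lemma lt_of_mem_suffix_nbrs {G : SimpleGraph (Fin (n+1))} {x y z : Fin (n+1)}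
    {l : List (Fin (n+1))} (hl : l <:+ nbrs G x) (hy : y ∈ l) (hz : z ∈ nbrs G x)
    (hzl : z ∉ l) : y < z := by
  classical
  obtain ⟨l₁, hl⟩ := hl
  have hsorted : (l₁ ++ l).Pairwise (· > ·) := by
    rw [hl, nbrs, List.pairwise_reverse]
    exact (Finset.sortedLT_sort _).pairwise
  rw [← hl] at hz
  rcases List.mem_append.mp hz with hz | hz
  · exact (List.pairwise_append.mp hsorted).2.2 z hz y hy
  · exact absurd hz hzl

lemma exists_iterate_eq_of_isChain {α : Type*} {p : α → α} {x v : α} {l : List α}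
    (hl : (x :: l).IsChain (fun a b => p a = b)) (hv : v ∈ x :: l) : ∃ t, p^[t] x = v := by
  induction l generalizing x with
  | nil => exact ⟨0, (List.mem_singleton.mp hv).symm⟩
  | cons y l ih =>
    rw [List.isChain_cons_cons] at hl
    rcases List.mem_cons.mp hv with rfl | hv
    · exact ⟨0, rfl⟩
    · obtain ⟨t, ht⟩ := ih hl.2 hv
      exact ⟨t + 1, by rw [iterate_succ_apply, hl.1, ht]⟩

/-- The witness is the child of `x` on the path from `y`; it is not `r` even when `x = r`. -/
lemma exists_isAncestor_parent_eq {p : Fin (n+1) → Fin (n+1)} {r x y : Fin (n+1)}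
    (hr : p r = r) (h : ∃ s, p^[s+1] y = x) (hxy : p y ≠ x) :
    ∃ c, IsAncestor p c y ∧ p c = x ∧ c ≠ r := by
  classical
  have hspec := Nat.find_spec h
  have hpos : 0 < Nat.find h := Nat.pos_of_ne_zero fun h0 => hxy (by rwa [h0] at hspec)
  have hpc : p (p^[Nat.find h] y) = x := by rwa [← iterate_succ_apply' p]
  refine ⟨p^[Nat.find h] y, ⟨_, hpos, rfl⟩, hpc, fun hc => ?_⟩
  refine Nat.find_min h (Nat.sub_lt hpos one_pos) ?_
  rw [show Nat.find h - 1 + 1 = Nat.find h by omega, hc, ← hpc, hc, hr]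

lemma ncard_prod_setOf {α β : Type*} [Fintype α] [Fintype β] (Q : α → β → Prop) :
    {p : α × β | Q p.1 p.2}.ncard = ∑ y, {x | Q x y}.ncard := by
  classical
  simp only [Set.ncard_eq_toFinset_card']
  rw [Finset.card_eq_sum_card_fiberwise (f := Prod.snd) (t := univ) fun _ _ => mem_univ _]
  refine sum_congr rfl fun y _ => ?_
  refine Finset.card_bij (fun p _ => p.1) ?_ ?_ ?_ <;> aesop

lemma ncard_setOf_adj {V : Type*} [Fintype V] (G : SimpleGraph V) :
    {p : V × V | G.Adj p.1 p.2}.ncard = 2 * G.edgeSet.ncard := by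
  classical
  have e : G.Dart ≃ {p : V × V | G.Adj p.1 p.2} :=
    ⟨fun d => ⟨d.toProd, d.adj⟩, fun p => ⟨p.1, p.2⟩, fun _ => rfl, fun _ => rfl⟩
  rw [← Nat.card_coe_set_eq, ← Nat.card_congr e, Nat.card_eq_fintype_card,
    G.dart_card_eq_twice_card_edges, ← Set.ncard_coe_finset, G.coe_edgeFinset]

/-- Orienting each edge towards the larger value of an injective `f` picks one of its two darts. -/
lemma ncard_setOf_adj_lt {V β : Type*} [Fintype V] [LinearOrder β] (G : SimpleGraph V)
    {f : V → β} (hf : Injective f) :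
    {p : V × V | G.Adj p.1 p.2 ∧ f p.1 < f p.2}.ncard = G.edgeSet.ncard := by
  set F := {p : V × V | G.Adj p.1 p.2 ∧ f p.1 < f p.2}
  have hsplit : {p : V × V | G.Adj p.1 p.2} = F ∪ Prod.swap '' F := by
    ext ⟨x, y⟩
    simp only [Set.mem_ofPred_eq, Set.mem_union, Set.image_swap_eq_preimage_swap,
      Set.mem_preimage, Prod.swap_prod_mk, F]
    constructor
    · intro h
      rcases lt_or_gt_of_ne (hf.ne (G.ne_of_adj h)) with hlt | hlt
      · exact Or.inl ⟨h, hlt⟩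
      · exact Or.inr ⟨h.symm, hlt⟩
    · rintro (h | h)
      · exact h.1
      · exact h.1.symm
  have hdisj : Disjoint F (Prod.swap '' F) := by
    rw [Set.image_swap_eq_preimage_swap]
    exact Set.disjoint_left.mpr fun p h h' => h.2.not_gt h'.2
  have := ncard_setOf_adj G
  rw [hsplit, Set.ncard_union_eq hdisj, Set.ncard_image_of_injective _ Prod.swap_injective] at this
  omega

lemma eq_of_parent_eq_of_isAncestor {p : Fin (n+1) → Fin (n+1)} {r c c' y : Fin (n+1)}
    (hr : p r = r) (hacyc : ∀ x, x ≠ r → ¬ IsAncestor p x x) (hc : IsAncestor p c y)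
    (hc' : IsAncestor p c' y) (hcr : c ≠ r) (hc'r : c' ≠ r) (h : p c = p c') : c = c' := by
  obtain ⟨a, -, rfl⟩ := hc
  obtain ⟨b, -, rfl⟩ := hc'
  have key : ∀ a b, a < b → p^[b] y ≠ r → p (p^[a] y) ≠ p (p^[b] y) := by
    intro a b hab hbr h
    obtain ⟨d, rfl⟩ := Nat.exists_eq_add_of_lt hab
    have hb : p^[a + d + 1] y = p^[d + 1] (p^[a] y) := by
      rw [← iterate_add_apply, Nat.add_comm (d + 1), Nat.add_assoc]
    by_cases hpr : p (p^[a] y) = r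
    · exact hbr (by rw [hb, iterate_succ_apply, hpr, iterate_fixed hr])
    · refine hacyc _ hpr ⟨d + 1, d.succ_pos, ?_⟩
      rw [← iterate_succ_apply p (d + 1), iterate_succ_apply' p (d + 1), ← hb, ← h]
  rcases lt_trichotomy a b with hab | rfl | hab
  · exact absurd h (key a b hab hc'r)
  · rfl
  · exact absurd h.symm (key b a hab hcr)

lemma RootedSpanningTree.ext {G : SimpleGraph (Fin (n+1))} {r : Fin (n+1)}
    {T T' : RootedSpanningTree G r} (h : T.parent = T'.parent) : T = T' := by
  cases T
  cases T'
  cases h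
  rfl

end PFG

namespace PFG.Burning

variable {n : ℕ}

/-- `todo v` lists the neighbours that `v` has not scanned yet. -/
structure State (n : ℕ) where
  stack : List (Fin (n+1))
  todo : Fin (n+1) → List (Fin (n+1))
  count : Fin (n+1) → ℕ
  parent : Fin (n+1) → Fin (n+1)
  burnt : Finset (Fin (n+1))

/-- `B i j c` decides whether `i` burns its unburnt neighbour `j`, whose counter is `c`. -/
abbrev Rule (n : ℕ) : Type := Fin (n+1) → Fin (n+1) → ℕ → Prop

open Classical in
noncomputable def step (B : Rule n) (s : State n) : State n :=
  match s.stack with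
  | [] => s
  | i :: rest =>
    match s.todo i with
    | [] => { s with stack := rest }
    | j :: js =>
      if j ∈ s.burnt then { s with todo := update s.todo i js }
      else if B i j (s.count j) then
        { s with todo := update s.todo i js, stack := j :: i :: rest,
                 burnt := insert j s.burnt, parent := update s.parent j i }
      else { s with todo := update s.todo i js, count := update s.count j (s.count j + 1) }

section StepEquations

variable {B : Rule n} {s : State n} {i j : Fin (n+1)} {rest js : List (Fin (n+1))}

lemma step_of_stack_eq_nil (h : s.stack = []) : step B s = s := by
  obtain ⟨_, _, _, _, _⟩ := s
  subst h; rfl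

lemma step_pop (h : s.stack = i :: rest) (htd : s.todo i = []) :
    step B s = { s with stack := rest } := by
  obtain ⟨_, _, _, _, _⟩ := s
  dsimp only at h htd
  subst h; simp [step, htd]

lemma step_skip (h : s.stack = i :: rest) (htd : s.todo i = j :: js) (hj : j ∈ s.burnt) :
    step B s = { s with todo := update s.todo i js } := by
  obtain ⟨_, _, _, _, _⟩ := s
  dsimp only at h htd
  subst h; simp [step, htd, hj]

lemma step_burn (h : s.stack = i :: rest) (htd : s.todo i = j :: js) (hj : j ∉ s.burnt)
    (hB : B i j (s.count j)) :
    step B s = { s with todo := update s.todo i js, stack := j :: i :: rest,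
                        burnt := insert j s.burnt, parent := update s.parent j i } := by
  obtain ⟨_, _, _, _, _⟩ := s
  dsimp only at h htd hj hB
  subst h; simp [step, htd, hj, hB]

lemma step_count (h : s.stack = i :: rest) (htd : s.todo i = j :: js) (hj : j ∉ s.burnt)
    (hB : ¬ B i j (s.count j)) :
    step B s = { s with todo := update s.todo i js,
                        count := update s.count j (s.count j + 1) } := by
  obtain ⟨_, _, _, _, _⟩ := s
  dsimp only at h htd hj hB
  subst h; simp [step, htd, hj, hB]

end StepEquations

lemma step_cases (B : Rule n) (s : State n) {motive : Prop}
    (nil : s.stack = [] → step B s = s → motive)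
    (pop : ∀ i rest, s.stack = i :: rest → s.todo i = [] →
      step B s = { s with stack := rest } → motive)
    (skip : ∀ i rest j js, s.stack = i :: rest → s.todo i = j :: js → j ∈ s.burnt →
      step B s = { s with todo := update s.todo i js } → motive)
    (burn : ∀ i rest j js, s.stack = i :: rest → s.todo i = j :: js → j ∉ s.burnt →
      B i j (s.count j) →
      step B s = { s with todo := update s.todo i js, stack := j :: i :: rest,
                          burnt := insert j s.burnt, parent := update s.parent j i } → motive)
    (count : ∀ i rest j js, s.stack = i :: rest → s.todo i = j :: js → j ∉ s.burnt →
      ¬ B i j (s.count j) →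
      step B s = { s with todo := update s.todo i js,
                          count := update s.count j (s.count j + 1) } → motive) :
    motive := by
  rcases hst : s.stack with _ | ⟨i, rest⟩
  · exact nil hst (step_of_stack_eq_nil hst)
  rcases htd : s.todo i with _ | ⟨j, js⟩
  · exact pop i rest hst htd (step_pop hst htd)
  by_cases hj : j ∈ s.burnt
  · exact skip i rest j js hst htd hj (step_skip hst htd hj)
  by_cases hB : B i j (s.count j)
  · exact burn i rest j js hst htd hj hB (step_burn hst htd hj hB)
  · exact count i rest j js hst htd hj hB (step_count hst htd hj hB)

lemma step_todo_of_head (B : Rule n) {s : State n} {i j : Fin (n+1)}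
    {rest js : List (Fin (n+1))} (hst : s.stack = i :: rest) (htd : s.todo i = j :: js) :
    (step B s).todo = update s.todo i js := by
  refine step_cases B s ?_ ?_ ?_ ?_ ?_ <;> intros <;> simp_all

section StepMonotone

variable {B : Rule n} {s : State n}

lemma burnt_subset_step : s.burnt ⊆ (step B s).burnt := by
  refine step_cases B s ?_ ?_ ?_ ?_ ?_ <;> intros <;> simp_all [Finset.subset_insert]

lemma update_tail_suffix {todo : Fin (n+1) → List (Fin (n+1))} {i j : Fin (n+1)}
    {js : List (Fin (n+1))} (htd : todo i = j :: js) (v : Fin (n+1)) :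
    update todo i js v <:+ todo v := by
  by_cases hvi : v = i
  · subst hvi; simp [htd]
  · simp [hvi]

lemma step_todo_suffix (v : Fin (n+1)) : (step B s).todo v <:+ s.todo v := by
  refine step_cases B s ?_ ?_ ?_ ?_ ?_
  · intro _ he; rw [he]
  · intro _ _ _ _ he; rw [he]
  all_goals intro _ _ _ _ _ htd; intros; simp_all [update_tail_suffix htd v]

lemma step_parent_of_mem_burnt {v : Fin (n+1)} (hv : v ∈ s.burnt) :
    (step B s).parent v = s.parent v := by
  refine step_cases B s ?_ ?_ ?_ ?_ ?_ <;> intros <;> simp_all [update_apply]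
  rintro rfl
  contradiction

lemma step_count_of_mem_burnt {v : Fin (n+1)} (hv : v ∈ s.burnt) :
    (step B s).count v = s.count v := by
  refine step_cases B s ?_ ?_ ?_ ?_ ?_ <;> intros <;> simp_all [update_apply]
  rintro rfl
  contradiction

lemma count_le_step (v : Fin (n+1)) : s.count v ≤ (step B s).count v := by
  refine step_cases B s ?_ ?_ ?_ ?_ ?_ <;> intros <;> simp_all
  rw [update_apply]
  split_ifs with hvj
  · rw [hvj]; exact Nat.le_succ _
  · rfl

lemma step_not_mem_stack {v : Fin (n+1)} (hv : v ∈ s.burnt) (hvs : v ∉ s.stack) :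
    v ∉ (step B s).stack := by
  refine step_cases B s ?_ ?_ ?_ ?_ ?_ <;> intros <;> simp_all
  rintro rfl
  contradiction

end StepMonotone

variable (G : SimpleGraph (Fin (n+1))) (r : Fin (n+1)) (B : Rule n)

noncomputable def init : State n := ⟨[r], fun v => nbrs G v, fun _ => 0, fun _ => r, {r}⟩

noncomputable def run (k : ℕ) : State n := (step B)^[k] (init G r)

lemma run_zero : run G r B 0 = init G r := rfl

lemma run_succ (k : ℕ) : run G r B (k+1) = step B (run G r B k) :=
  iterate_succ_apply' _ _ _

structure Invariant (s : State n) : Prop where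
  chain : s.stack.IsChain (fun a b => s.parent a = b)
  stack_subset_burnt : ∀ v ∈ s.stack, v ∈ s.burnt
  todo_suffix : ∀ v, s.todo v <:+ nbrs G v
  todo_of_popped : ∀ v ∈ s.burnt, v ∉ s.stack → s.todo v = []
  root_burnt : r ∈ s.burnt
  parent_root : s.parent r = r
  adj_parent : ∀ v ∈ s.burnt, v ≠ r → G.Adj (s.parent v) v
  count_root : s.count r = 0

namespace Invariant

variable {G r} {s : State n} (hs : Invariant G r s) {i j : Fin (n+1)} {rest js : List (Fin (n+1))}
include hs

lemma head_burnt (hst : s.stack = i :: rest) : i ∈ s.burnt :=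
  hs.stack_subset_burnt i (by simp [hst])

lemma todo_suffix_update (htd : s.todo i = j :: js) (v : Fin (n+1)) :
    update s.todo i js v <:+ nbrs G v := by
  by_cases hvi : v = i
  · subst hvi
    simpa using (List.suffix_cons j js).trans (htd ▸ hs.todo_suffix v)
  · simpa [hvi] using hs.todo_suffix v

lemma todo_of_popped_update (hst : s.stack = i :: rest) (v : Fin (n+1)) (hv : v ∈ s.burnt)
    (hvs : v ∉ s.stack) : update s.todo i js v = [] := by
  have hvi : v ≠ i := by rintro rfl; simp [hst] at hvs
  simpa [hvi] using hs.todo_of_popped v hv hvs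

lemma pop (hst : s.stack = i :: rest) (htd : s.todo i = []) :
    Invariant G r { s with stack := rest } where
  chain := by simpa [hst] using hs.chain.tail
  stack_subset_burnt v hv := hs.stack_subset_burnt v (by simp [hst, hv])
  todo_suffix := hs.todo_suffix
  todo_of_popped v hv hvs := by
    by_cases hvi : v = i
    · exact hvi ▸ htd
    · exact hs.todo_of_popped v hv (by simp_all)
  root_burnt := hs.root_burnt
  parent_root := hs.parent_root
  adj_parent := hs.adj_parent
  count_root := hs.count_root

lemma skip (hst : s.stack = i :: rest) (htd : s.todo i = j :: js) :
    Invariant G r { s with todo := update s.todo i js } :=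
  { hs with
    todo_suffix := hs.todo_suffix_update htd
    todo_of_popped := hs.todo_of_popped_update hst }

lemma burn (hst : s.stack = i :: rest) (htd : s.todo i = j :: js) (hj : j ∉ s.burnt) :
    Invariant G r { s with todo := update s.todo i js, stack := j :: i :: rest,
                           burnt := insert j s.burnt, parent := update s.parent j i } where
  chain := by
    have hc := hs.chain
    rw [hst] at hc
    refine List.isChain_cons_cons.mpr ⟨by simp, hc.imp_of_mem_imp ?_⟩
    intro a _ ha _ hab
    have haj : a ≠ j := by rintro rfl; exact hj (hs.stack_subset_burnt a (by simp [hst, ha]))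
    simpa [haj] using hab
  stack_subset_burnt v hv := by
    rcases List.mem_cons.mp hv with rfl | hv
    · exact Finset.mem_insert_self _ _
    · exact Finset.mem_insert_of_mem (hs.stack_subset_burnt v (hst ▸ hv))
  todo_suffix := hs.todo_suffix_update htd
  todo_of_popped v hv hvs := by
    simp only [List.mem_cons, not_or] at hvs
    refine hs.todo_of_popped_update hst v ?_ (by simp [hst, hvs.2.1, hvs.2.2])
    exact (Finset.mem_insert.mp hv).resolve_left hvs.1
  root_burnt := Finset.mem_insert_of_mem hs.root_burnt
  parent_root := by
    have hjr : r ≠ j := by rintro rfl; exact hj hs.root_burnt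
    simpa [hjr] using hs.parent_root
  adj_parent v hv hvr := by
    by_cases hvj : v = j
    · subst hvj
      simpa using mem_nbrs.mp ((hs.todo_suffix i).subset (by simp [htd]))
    · simpa [hvj] using hs.adj_parent v ((Finset.mem_insert.mp hv).resolve_left hvj) hvr
  count_root := hs.count_root

lemma count (hst : s.stack = i :: rest) (htd : s.todo i = j :: js) (hj : j ∉ s.burnt) :
    Invariant G r { s with todo := update s.todo i js,
                           count := update s.count j (s.count j + 1) } :=
  { hs with
    todo_suffix := hs.todo_suffix_update htd
    todo_of_popped := hs.todo_of_popped_update hst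
    count_root := by
      have hjr : r ≠ j := by rintro rfl; exact hj hs.root_burnt
      simpa [hjr] using hs.count_root }

end Invariant

lemma invariant_step {s : State n} (hs : Invariant G r s) : Invariant G r (step B s) := by
  refine step_cases B s ?_ ?_ ?_ ?_ ?_
  · intro _ he; rwa [he]
  · intro i rest hst htd he; exact he ▸ hs.pop hst htd
  · intro i rest j js hst htd _ he; exact he ▸ hs.skip hst htd
  · intro i rest j js hst htd hj _ he; exact he ▸ hs.burn hst htd hj
  · intro i rest j js hst htd hj _ he; exact he ▸ hs.count hst htd hj

lemma invariant_run (k : ℕ) : Invariant G r (run G r B k) := by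
  induction k with
  | zero => constructor <;> simp [run_zero, init]
  | succ k ih => rw [run_succ]; exact invariant_step G r B ih

section RunMonotone

variable {G r B} {k m : ℕ} (hkm : k ≤ m)
include hkm

lemma burnt_run_subset : (run G r B k).burnt ⊆ (run G r B m).burnt := by
  induction m, hkm using Nat.le_induction with
  | base => rfl
  | succ m _ ih => rw [run_succ]; exact ih.trans burnt_subset_step

lemma count_run_le (v : Fin (n+1)) : (run G r B k).count v ≤ (run G r B m).count v := by
  induction m, hkm using Nat.le_induction with
  | base => rfl
  | succ m _ ih => rw [run_succ]; exact ih.trans (count_le_step v)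

lemma todo_run_suffix (v : Fin (n+1)) : (run G r B m).todo v <:+ (run G r B k).todo v := by
  induction m, hkm using Nat.le_induction with
  | base => exact List.suffix_refl _
  | succ m _ ih => rw [run_succ]; exact (step_todo_suffix v).trans ih

variable {v : Fin (n+1)} (hv : v ∈ (run G r B k).burnt)
include hv

lemma parent_run_eq : (run G r B m).parent v = (run G r B k).parent v := by
  induction m, hkm using Nat.le_induction with
  | base => rfl
  | succ m hkm ih =>
    rw [run_succ, step_parent_of_mem_burnt (burnt_run_subset hkm hv), ih]

lemma count_run_eq : (run G r B m).count v = (run G r B k).count v := by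
  induction m, hkm using Nat.le_induction with
  | base => rfl
  | succ m hkm ih =>
    rw [run_succ, step_count_of_mem_burnt (burnt_run_subset hkm hv), ih]

lemma not_mem_stack_run (hvs : v ∉ (run G r B k).stack) : v ∉ (run G r B m).stack := by
  induction m, hkm using Nat.le_induction with
  | base => exact hvs
  | succ m hkm ih => rw [run_succ]; exact step_not_mem_stack (burnt_run_subset hkm hv) ih

end RunMonotone

def BurntAt (k : ℕ) (v : Fin (n+1)) : Prop := v ∈ (run G r B k).burnt

def Scanned (k : ℕ) (x y : Fin (n+1)) : Prop := y ∈ nbrs G x ∧ y ∉ (run G r B k).todo x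

def ScansAt (k : ℕ) (x y : Fin (n+1)) : Prop :=
  ¬ Scanned G r B k x y ∧ Scanned G r B (k+1) x y

def BurnsAt (k : ℕ) (v : Fin (n+1)) : Prop := ¬ BurntAt G r B k v ∧ BurntAt G r B (k+1) v

section Events

variable {G r B}

lemma BurntAt.mono {k m : ℕ} (hkm : k ≤ m) {v : Fin (n+1)} (hv : BurntAt G r B k v) :
    BurntAt G r B m v :=
  burnt_run_subset hkm hv

lemma Scanned.mono {k m : ℕ} (hkm : k ≤ m) {x y : Fin (n+1)} (h : Scanned G r B k x y) :
    Scanned G r B m x y :=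
  ⟨h.1, fun hy => h.2 ((todo_run_suffix hkm x).subset hy)⟩

lemma burntAt_zero_iff {v : Fin (n+1)} : BurntAt G r B 0 v ↔ v = r := by
  simp [BurntAt, run_zero, init]

lemma burntAt_root (k : ℕ) : BurntAt G r B k r :=
  (burntAt_zero_iff.mpr rfl).mono k.zero_le

lemma not_scanned_zero (x y : Fin (n+1)) : ¬ Scanned G r B 0 x y :=
  fun h => h.2 (by simpa [run_zero, init] using h.1)

lemma ScansAt.unique {k m : ℕ} {x y : Fin (n+1)} (hk : ScansAt G r B k x y)
    (hm : ScansAt G r B m x y) : k = m := by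
  by_contra hne
  rcases Nat.lt_or_gt_of_ne hne with h | h
  · exact hm.1 (hk.2.mono h)
  · exact hk.1 (hm.2.mono h)

lemma exists_scansAt_of_scanned {m : ℕ} {x y : Fin (n+1)} (h : Scanned G r B m x y) :
    ∃ k < m, ScansAt G r B k x y := by
  induction m with
  | zero => exact absurd h (not_scanned_zero x y)
  | succ m ih =>
    by_cases h' : Scanned G r B m x y
    · obtain ⟨k, hk, hs⟩ := ih h'
      exact ⟨k, hk.trans m.lt_succ_self, hs⟩
    · exact ⟨m, m.lt_succ_self, h', h⟩

lemma scansAt_iff {k : ℕ} {x y : Fin (n+1)} :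
    ScansAt G r B k x y ↔
      ∃ rest js, (run G r B k).stack = x :: rest ∧ (run G r B k).todo x = y :: js := by
  have hinv := invariant_run G r B k
  constructor
  · rintro ⟨hk, hy_nbr, hy⟩
    have hy_todo : y ∈ (run G r B k).todo x := by_contra fun h => hk ⟨hy_nbr, h⟩
    rw [run_succ] at hy
    refine step_cases B (run G r B k) ?_ ?_ ?_ ?_ ?_
    · intro _ he; rw [he] at hy; exact absurd hy_todo hy
    · intro _ _ _ _ he; rw [he] at hy; exact absurd hy_todo hy
    all_goals
      intro i rest j js hst htd
      intros
      rw [step_todo_of_head B hst htd] at hy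
      have hxi : x = i := by_contra fun h => hy (by simpa [h] using hy_todo)
      subst hxi
      refine ⟨rest, js, hst, ?_⟩
      rw [htd] at hy_todo ⊢
      simp only [update_self] at hy
      rw [(List.mem_cons.mp hy_todo).resolve_right hy]
  · rintro ⟨rest, js, hst, htd⟩
    have hnd : (y :: js).Nodup := htd ▸ (hinv.todo_suffix x).sublist.nodup (nbrs_nodup G x)
    refine ⟨fun h => h.2 (by simp [htd]), ?_, ?_⟩
    · exact (hinv.todo_suffix x).subset (by simp [htd])
    · rw [run_succ, step_todo_of_head B hst htd, update_self]
      exact (List.nodup_cons.mp hnd).1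

lemma scansAt_iff_of_head {i j x y : Fin (n+1)} {rest js : List (Fin (n+1))}
    (hst : (run G r B k).stack = i :: rest) (htd : (run G r B k).todo i = j :: js) :
    ScansAt G r B k x y ↔ x = i ∧ y = j := by
  rw [scansAt_iff]
  constructor
  · rintro ⟨_, _, hst', htd'⟩
    obtain rfl := List.head_eq_of_cons_eq (hst'.symm.trans hst)
    exact ⟨rfl, List.head_eq_of_cons_eq (htd'.symm.trans htd)⟩
  · rintro ⟨rfl, rfl⟩
    exact ⟨_, _, hst, htd⟩

lemma ScansAt.left_unique {k : ℕ} {x x' y : Fin (n+1)} (h : ScansAt G r B k x y)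
    (h' : ScansAt G r B k x' y) : x = x' := by
  obtain ⟨_, _, hst, -⟩ := scansAt_iff.mp h
  obtain ⟨_, _, hst', -⟩ := scansAt_iff.mp h'
  exact List.head_eq_of_cons_eq (hst.symm.trans hst')

lemma ScansAt.adj {k : ℕ} {x y : Fin (n+1)} (h : ScansAt G r B k x y) : G.Adj x y :=
  mem_nbrs.mp h.2.1

lemma ScansAt.burntAt {k : ℕ} {x y : Fin (n+1)} (h : ScansAt G r B k x y) :
    BurntAt G r B k x := by
  obtain ⟨rest, js, hst, -⟩ := scansAt_iff.mp h
  exact (invariant_run G r B k).head_burnt hst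

lemma burnsAt_iff {k : ℕ} {v : Fin (n+1)} :
    BurnsAt G r B k v ↔ ∃ x rest js, (run G r B k).stack = x :: rest ∧
      (run G r B k).todo x = v :: js ∧ v ∉ (run G r B k).burnt ∧
      B x v ((run G r B k).count v) := by
  constructor
  · rintro ⟨hk, hk1⟩
    rw [BurntAt, run_succ] at hk1
    refine step_cases B (run G r B k) ?_ ?_ ?_ ?_ ?_
    · intro _ he; rw [he] at hk1; exact absurd hk1 hk
    · intro _ _ _ _ he; rw [he] at hk1; exact absurd hk1 hk
    · intro _ _ _ _ _ _ _ he; rw [he] at hk1; exact absurd hk1 hk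
    · intro i rest j js hst htd hj hB he
      rw [he] at hk1
      obtain rfl : v = j := (Finset.mem_insert.mp hk1).resolve_right hk
      exact ⟨i, rest, js, hst, htd, hj, hB⟩
    · intro _ _ _ _ _ _ _ _ he; rw [he] at hk1; exact absurd hk1 hk
  · rintro ⟨x, rest, js, hst, htd, hv, hB⟩
    refine ⟨hv, ?_⟩
    rw [BurntAt, run_succ, step_burn hst htd hv hB]
    exact Finset.mem_insert_self _ _

lemma BurnsAt.right_unique {k : ℕ} {v w : Fin (n+1)} (hv : BurnsAt G r B k v)
    (hw : BurnsAt G r B k w) : v = w := by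
  obtain ⟨x, _, _, hx, hxv, -⟩ := burnsAt_iff.mp hv
  obtain ⟨y, _, _, hy, hyw, -⟩ := burnsAt_iff.mp hw
  obtain rfl : x = y := List.head_eq_of_cons_eq (hx.symm.trans hy)
  exact List.head_eq_of_cons_eq (hxv.symm.trans hyw)

end Events

noncomputable def burnTime (v : Fin (n+1)) : ℕ := sInf {k | BurntAt G r B k v}

section BurnTime

variable {G r B} {k : ℕ} {v : Fin (n+1)}

lemma burnTime_le (h : BurntAt G r B k v) : burnTime G r B v ≤ k := Nat.sInf_le h

lemma burntAt_burnTime (h : BurntAt G r B k v) : BurntAt G r B (burnTime G r B v) v :=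
  Nat.sInf_mem (s := {k | BurntAt G r B k v}) ⟨k, h⟩

lemma burntAt_iff_burnTime_le {m : ℕ} (h : BurntAt G r B m v) :
    BurntAt G r B k v ↔ burnTime G r B v ≤ k :=
  ⟨burnTime_le, fun hk => (burntAt_burnTime h).mono hk⟩

lemma burnTime_root : burnTime G r B r = 0 := Nat.le_zero.mp (burnTime_le (burntAt_root 0))

lemma exists_burnsAt (h : BurntAt G r B k v) (hvr : v ≠ r) :
    ∃ m, burnTime G r B v = m + 1 ∧ BurnsAt G r B m v := by
  have hpos : burnTime G r B v ≠ 0 := fun h0 =>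
    hvr (burntAt_zero_iff.mp (h0 ▸ burntAt_burnTime h))
  obtain ⟨m, hm⟩ := Nat.exists_eq_succ_of_ne_zero hpos
  refine ⟨m, hm, fun hb => ?_, ?_⟩
  · have := burnTime_le hb
    omega
  · rw [← Nat.succ_eq_add_one, ← hm]
    exact burntAt_burnTime h

end BurnTime

/-- Burning a vertex also pushes it on the stack, hence the factor `2`. -/
noncomputable def potential (s : State n) : ℕ :=
  2 * ((n+1) - s.burnt.card) + ∑ v, (s.todo v).length + s.stack.length

lemma sum_length_update_tail {todo : Fin (n+1) → List (Fin (n+1))} {i j : Fin (n+1)}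
    {js : List (Fin (n+1))} (htd : todo i = j :: js) :
    ∑ v, (update todo i js v).length + 1 = ∑ v, (todo v).length := by
  rw [← Finset.add_sum_erase _ _ (Finset.mem_univ i),
    ← Finset.add_sum_erase _ _ (Finset.mem_univ i),
    Finset.sum_congr rfl fun v hv => by rw [update_of_ne (Finset.ne_of_mem_erase hv)]]
  simp [htd]
  omega

lemma potential_step_lt {B : Rule n} {s : State n} (h : s.stack ≠ []) :
    potential (step B s) < potential s := by
  have hcard : s.burnt.card ≤ n + 1 := by
    simpa using Finset.card_le_card (Finset.subset_univ s.burnt)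
  refine step_cases B s ?_ ?_ ?_ ?_ ?_
  · intro h' _; exact absurd h' h
  · intro i rest hst _ he
    simp [he, potential, hst]
  · intro i rest j js hst htd _ he
    have := sum_length_update_tail htd
    simp only [he, potential]
    omega
  · intro i rest j js hst htd hj _ he
    have := sum_length_update_tail htd
    have hcard' : (insert j s.burnt).card ≤ n + 1 := by
      simpa using Finset.card_le_card (Finset.subset_univ (insert j s.burnt))
    simp only [he, potential, hst, List.length_cons, Finset.card_insert_of_notMem hj] at hcard' ⊢
    omega
  · intro i rest j js hst htd _ _ he
    have := sum_length_update_tail htd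
    simp only [he, potential]
    omega

lemma potential_run_add_le {k : ℕ} (hk : (run G r B k).stack ≠ []) :
    potential (run G r B k) + k ≤ potential (init G r) := by
  induction k with
  | zero => rfl
  | succ k ih =>
    have hk' : (run G r B k).stack ≠ [] := fun h => by
      rw [run_succ, step_of_stack_eq_nil h] at hk; exact hk h
    have := potential_step_lt (B := B) hk'
    rw [← run_succ] at this
    have := ih hk'
    omega

noncomputable def stopTime : ℕ := potential (init G r : State n) + 1

noncomputable def final : State n := run G r B (stopTime G r)

def BurnsAll : Prop := ∀ v, BurntAt G r B (stopTime G r) v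

section Final

variable {G r B} {k : ℕ} {c v x y : Fin (n+1)}

lemma stack_final : (final G r B).stack = [] := by
  by_contra h
  have := potential_run_add_le G r B h
  rw [stopTime] at this
  omega

lemma run_eq_final {m : ℕ} (h : stopTime G r ≤ m) : run G r B m = final G r B := by
  induction m, h using Nat.le_induction with
  | base => rfl
  | succ m _ ih => rw [run_succ, ih, step_of_stack_eq_nil stack_final]

lemma lt_stopTime_of_stack_ne_nil {k : ℕ} (h : (run G r B k).stack ≠ []) :
    k < stopTime G r := by
  by_contra hk
  exact h (run_eq_final (not_lt.mp hk) ▸ stack_final)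

lemma ScansAt.lt_stopTime {k : ℕ} {x y : Fin (n+1)} (h : ScansAt G r B k x y) :
    k < stopTime G r := by
  obtain ⟨rest, js, hst, -⟩ := scansAt_iff.mp h
  exact lt_stopTime_of_stack_ne_nil (B := B) (by simp [hst])

lemma BurnsAt.lt_stopTime {k : ℕ} {v : Fin (n+1)} (h : BurnsAt G r B k v) :
    k < stopTime G r := by
  obtain ⟨x, rest, js, hst, -⟩ := burnsAt_iff.mp h
  exact lt_stopTime_of_stack_ne_nil (B := B) (by simp [hst])

lemma scanned_final {x y : Fin (n+1)} (hx : BurntAt G r B (stopTime G r) x) (hxy : G.Adj x y) :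
    Scanned G r B (stopTime G r) x y := by
  have hst : (run G r B (stopTime G r)).stack = [] := stack_final
  refine ⟨mem_nbrs.mpr hxy, ?_⟩
  rw [(invariant_run G r B _).todo_of_popped x hx (hst ▸ List.not_mem_nil)]
  exact List.not_mem_nil

lemma final_parent_root : (final G r B).parent r = r := (invariant_run G r B _).parent_root

lemma final_count_root : (final G r B).count r = 0 := (invariant_run G r B _).count_root

lemma adj_final_parent (hv : BurntAt G r B (stopTime G r) v) (hvr : v ≠ r) :
    G.Adj ((final G r B).parent v) v :=
  (invariant_run G r B _).adj_parent v hv hvr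

lemma ne_root_of_adj_final_parent (h : G.Adj ((final G r B).parent v) v) : v ≠ r := by
  rintro rfl
  exact h.ne final_parent_root

lemma BurnsAt.exists_final (h : BurnsAt G r B k v) :
    ∃ rest js, (run G r B k).stack = (final G r B).parent v :: rest ∧
      (run G r B k).todo ((final G r B).parent v) = v :: js ∧
      B ((final G r B).parent v) v ((run G r B k).count v) := by
  obtain ⟨x, rest, js, hst, htd, hv, hB⟩ := burnsAt_iff.mp h
  have hx : (final G r B).parent v = x := by
    rw [final, parent_run_eq h.lt_stopTime h.2, run_succ, step_burn hst htd hv hB]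
    exact update_self _ _ _
  exact hx ▸ ⟨rest, js, hst, htd, hB⟩

lemma BurnsAt.scansAt (h : BurnsAt G r B k v) : ScansAt G r B k ((final G r B).parent v) v := by
  obtain ⟨rest, js, hst, htd, -⟩ := h.exists_final
  exact scansAt_iff.mpr ⟨rest, js, hst, htd⟩

lemma BurnsAt.count_final (h : BurnsAt G r B k v) :
    (final G r B).count v = (run G r B k).count v := by
  obtain ⟨x, rest, js, hst, htd, hv, hB⟩ := burnsAt_iff.mp h
  rw [final, count_run_eq h.lt_stopTime h.2, run_succ, step_burn hst htd hv hB]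

lemma exists_iterate_eq_of_mem_stack {rest : List (Fin (n+1))} (hk : k ≤ stopTime G r)
    (hst : (run G r B k).stack = x :: rest) (hv : v ∈ (run G r B k).stack) :
    ∃ t, (final G r B).parent^[t] x = v := by
  have hinv := invariant_run G r B k
  have hchain := hinv.chain
  rw [hst] at hchain hv
  refine exists_iterate_eq_of_isChain (hchain.imp_of_mem_imp ?_) hv
  intro a _ ha _ hab
  rw [final, parent_run_eq hk (hinv.stack_subset_burnt a (hst ▸ ha)), hab]

section Completed

variable (hB : BurnsAll G r B)
include hB

lemma burnTime_final_parent_lt (hvr : v ≠ r) :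
    burnTime G r B ((final G r B).parent v) < burnTime G r B v := by
  obtain ⟨k, hk, hburn⟩ := exists_burnsAt (hB v) hvr
  rw [hk]
  exact Nat.lt_succ_of_le (burnTime_le hburn.scansAt.burntAt)

lemma burnsAt_of_scansAt_final_parent (hvr : v ≠ r)
    (h : ScansAt G r B k ((final G r B).parent v) v) : BurnsAt G r B k v := by
  obtain ⟨m, -, hm⟩ := exists_burnsAt (hB v) hvr
  rwa [h.unique hm.scansAt]

lemma burnTime_injective : Injective (burnTime G r B) := by
  have hpos : ∀ v, v ≠ r → ∃ m, burnTime G r B v = m + 1 ∧ BurnsAt G r B m v :=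
    fun v hvr => exists_burnsAt (hB v) hvr
  intro v w h
  rcases eq_or_ne v r with hvr | hvr <;> rcases eq_or_ne w r with hwr | hwr
  · rw [hvr, hwr]
  · obtain ⟨m, hm, -⟩ := hpos w hwr
    rw [hvr, burnTime_root] at h
    omega
  · obtain ⟨m, hm, -⟩ := hpos v hvr
    rw [hwr, burnTime_root] at h
    omega
  · obtain ⟨m, hm, hv⟩ := hpos v hvr
    obtain ⟨m', hm', hw⟩ := hpos w hwr
    obtain rfl : m = m' := by omega
    exact hv.right_unique hw

lemma exists_final_parent_iterate_eq_root (v : Fin (n+1)) :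
    ∃ k, (final G r B).parent^[k] v = r := by
  induction hm : burnTime G r B v using Nat.strong_induction_on generalizing v with
  | _ m ih =>
    by_cases hvr : v = r
    · exact ⟨0, hvr⟩
    obtain ⟨k, hk⟩ := ih _ (hm ▸ burnTime_final_parent_lt hB hvr) _ rfl
    exact ⟨k + 1, by rw [iterate_succ_apply, hk]⟩

lemma burnTime_lt_of_isAncestor (h : IsAncestor (final G r B).parent x v) (hxr : x ≠ r) :
    burnTime G r B x < burnTime G r B v := by
  obtain ⟨t, ht, rfl⟩ := h
  obtain ⟨t, rfl⟩ := Nat.exists_eq_add_of_lt ht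
  induction t generalizing v with
  | zero =>
    have hvr : v ≠ r := by rintro rfl; exact hxr final_parent_root
    exact burnTime_final_parent_lt hB hvr
  | succ t ih =>
    have hvr : v ≠ r := by rintro rfl; exact hxr (iterate_fixed final_parent_root _)
    rw [iterate_succ_apply] at hxr ⊢
    exact (ih (by omega) hxr).trans (burnTime_final_parent_lt hB hvr)

lemma not_isAncestor_self (hxr : x ≠ r) : ¬ IsAncestor (final G r B).parent x x :=
  fun h => (burnTime_lt_of_isAncestor hB h hxr).false

noncomputable def tree : RootedSpanningTree G r where
  parent := (final G r B).parent
  parent_root := final_parent_root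
  adj_parent v hvr := adj_final_parent (hB v) hvr
  reaches_root := exists_final_parent_iterate_eq_root hB

lemma not_mem_stack_of_iterate_eq {rest : List (Fin (n+1))} {t : ℕ} (hk : k ≤ stopTime G r)
    (hst : (run G r B k).stack = x :: rest) (hc : (final G r B).parent c = x) (hcr : c ≠ r)
    (hv : (final G r B).parent^[t] v = c) : v ∉ (run G r B k).stack := by
  intro hmem
  obtain ⟨s, hs⟩ := exists_iterate_eq_of_mem_stack hk hst hmem
  refine not_isAncestor_self hB hcr ⟨t + s + 1, by omega, ?_⟩
  rw [iterate_succ_apply, hc, iterate_add_apply, hs, hv]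

lemma burntAt_of_final_parent_popped (hvr : v ≠ r)
    (hp : BurntAt G r B k ((final G r B).parent v))
    (hps : (final G r B).parent v ∉ (run G r B k).stack) : BurntAt G r B k v := by
  have hsc : Scanned G r B k ((final G r B).parent v) v := by
    refine ⟨mem_nbrs.mpr (adj_final_parent (hB v) hvr), ?_⟩
    rw [(invariant_run G r B k).todo_of_popped _ hp hps]
    exact List.not_mem_nil
  obtain ⟨m, hm, hscan⟩ := exists_scansAt_of_scanned hsc
  exact (burnsAt_of_scansAt_final_parent hB hvr hscan).2.mono hm

/-- The search below a burnt child `c` of the top of the stack is complete. -/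
lemma burntAt_of_iterate_eq {rest : List (Fin (n+1))} (hk : k ≤ stopTime G r)
    (hst : (run G r B k).stack = x :: rest) (hc : (final G r B).parent c = x) (hcr : c ≠ r)
    (hcb : BurntAt G r B k c) :
    ∀ t v, (final G r B).parent^[t] v = c → BurntAt G r B k v
  | 0, _, hv => by rw [iterate_zero_apply] at hv; rwa [hv]
  | t + 1, v, hv => by
    rw [iterate_succ_apply] at hv
    have hvr : v ≠ r := by
      rintro rfl
      rw [final_parent_root, iterate_fixed final_parent_root] at hv
      exact hcr hv.symm
    exact burntAt_of_final_parent_popped hB hvr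
      (burntAt_of_iterate_eq hk hst hc hcr hcb t _ hv)
      (not_mem_stack_of_iterate_eq hB hk hst hc hcr hv)

lemma exists_kappaInversion_of_late_scan (hscan : ScansAt G r B k x y)
    (hlate : BurntAt G r B k y) (hfirst : burnTime G r B x < burnTime G r B y) :
    ∃ c, IsKappaInversion G r (final G r B).parent c y ∧ (final G r B).parent c = x := by
  have hyr : y ≠ r := by rintro rfl; rw [burnTime_root] at hfirst; omega
  obtain ⟨m, hm, hburn⟩ := exists_burnsAt (hB y) hyr
  obtain ⟨rest, -, hst, -⟩ := hburn.exists_final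
  have hmk : m < k := by have := burnTime_le hlate; omega
  obtain ⟨restk, jsk, hstk, htdk⟩ := scansAt_iff.mp hscan
  -- `x` is still on the stack at time `k`, so it already was when `y` got burnt
  have hxm : x ∈ (run G r B m).stack := by
    by_contra hx
    have hxb : BurntAt G r B m x := (burntAt_iff_burnTime_le (hB x)).mpr (by omega)
    exact not_mem_stack_run hmk.le hxb hx (by simp [hstk])
  obtain ⟨t, ht⟩ := exists_iterate_eq_of_mem_stack hburn.lt_stopTime.le hst hxm
  have hxy : (final G r B).parent y ≠ x := fun h =>
    (burnsAt_of_scansAt_final_parent hB hyr (h ▸ hscan)).1 hlate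
  obtain ⟨c, hanc, hpc, hcr⟩ := exists_isAncestor_parent_eq final_parent_root ⟨t, ht⟩ hxy
  -- `x` burnt `c` before scanning `y`, and scans its neighbours in decreasing order
  obtain ⟨mc, hmc, hburnc⟩ := exists_burnsAt (hB c) hcr
  have hcscan : ScansAt G r B mc x c := hpc ▸ hburnc.scansAt
  have hmck : mc < k := by have := burnTime_lt_of_isAncestor hB hanc hcr; omega
  have hyc : y < c := lt_of_mem_suffix_nbrs ((invariant_run G r B k).todo_suffix x)
    (by simp [htdk]) hcscan.2.1 (hcscan.2.mono hmck).2
  exact ⟨c, ⟨hanc, hyc, hcr, hpc ▸ hscan.adj⟩, hpc⟩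

lemma exists_late_scan_of_kappaInversion
    (hki : IsKappaInversion G r (final G r B).parent c y) :
    ∃ k, ScansAt G r B k ((final G r B).parent c) y ∧ BurntAt G r B k y ∧
      burnTime G r B ((final G r B).parent c) < burnTime G r B y := by
  obtain ⟨hanc, hyc, hcr, hadj⟩ := hki
  have hxc := burnTime_final_parent_lt hB hcr
  have hcy := burnTime_lt_of_isAncestor hB hanc hcr
  obtain ⟨k, -, hscan⟩ := exists_scansAt_of_scanned (scanned_final (hB _) hadj)
  refine ⟨k, hscan, ?_, hxc.trans hcy⟩
  obtain ⟨m, hm, hburnc⟩ := exists_burnsAt (hB c) hcr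
  obtain ⟨-, jsc, -, htdc, -⟩ := hburnc.exists_final
  obtain ⟨restk, jsk, hstk, htdk⟩ := scansAt_iff.mp hscan
  -- the parent of `c` scans its neighbours in decreasing order, so it scans `c` before `y`
  have hmk : m < k := by
    rcases lt_trichotomy k m with h | rfl | h
    · have := lt_of_mem_suffix_nbrs (y := c) ((invariant_run G r B m).todo_suffix _)
        (by simp [htdc]) (mem_nbrs.mpr hadj) (hscan.2.mono h).2
      exact absurd hyc this.not_gt
    · rw [htdc] at htdk
      exact absurd (List.head_eq_of_cons_eq htdk) (ne_of_gt hyc)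
    · exact h
  obtain ⟨t, -, ht⟩ := hanc
  refine burntAt_of_iterate_eq hB hscan.lt_stopTime.le hstk rfl hcr ?_ t y ht
  exact (burntAt_iff_burnTime_le (hB c)).mpr (by omega)

end Completed

end Final

/-- A scan by `x` that raises the counter of `y`. -/
def CountingScan (x y : Fin (n+1)) : Prop := ∃ m, ScansAt G r B m x y ∧ ¬ BurntAt G r B (m+1) y

section Counters

variable {G r B} {k : ℕ} {x j : Fin (n+1)}

lemma count_run_succ (y : Fin (n+1)) :
    (run G r B (k+1)).count y =
      (run G r B k).count y + {x | ScansAt G r B k x y ∧ ¬ BurntAt G r B (k+1) y}.ncard := by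
  have hempty : (∀ x, ScansAt G r B k x y → BurntAt G r B (k+1) y) →
      {x | ScansAt G r B k x y ∧ ¬ BurntAt G r B (k+1) y}.ncard = 0 := fun h =>
    (Set.ncard_eq_zero).mpr (Set.eq_empty_of_forall_notMem fun x hx => hx.2 (h x hx.1))
  rw [run_succ]
  refine step_cases B (run G r B k) ?_ ?_ ?_ ?_ ?_
  · intro hst he
    rw [he, hempty, add_zero]
    intro x hx
    simp [scansAt_iff, hst] at hx
  · intro i rest hst htd he
    rw [he, hempty, add_zero]
    intro x hx
    obtain ⟨_, _, hst', htd'⟩ := scansAt_iff.mp hx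
    obtain rfl := List.head_eq_of_cons_eq (hst'.symm.trans hst)
    simp [htd] at htd'
  · intro i rest j js hst htd hj he
    rw [he, hempty, add_zero]
    intro x hx
    obtain ⟨-, rfl⟩ := (scansAt_iff_of_head hst htd).mp hx
    exact BurntAt.mono k.le_succ hj
  · intro i rest j js hst htd hj hB he
    rw [he, hempty, add_zero]
    intro x hx
    obtain ⟨-, rfl⟩ := (scansAt_iff_of_head hst htd).mp hx
    exact (burnsAt_iff.mpr ⟨i, rest, js, hst, htd, hj, hB⟩).2
  · intro i rest j js hst htd hj hB he
    have hburnt : ¬ BurntAt G r B (k+1) j := by rwa [BurntAt, run_succ, he]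
    rw [he]
    by_cases hyj : y = j
    · subst hyj
      have : {x | ScansAt G r B k x y ∧ ¬ BurntAt G r B (k+1) y} = {i} := by
        ext x
        simp [scansAt_iff_of_head hst htd, hburnt]
      simp [this]
    · rw [hempty fun x hx => absurd ((scansAt_iff_of_head hst htd).mp hx).2 hyj]
      simp [hyj]

lemma count_run (k : ℕ) (y : Fin (n+1)) :
    (run G r B k).count y =
      {x | ∃ m < k, ScansAt G r B m x y ∧ ¬ BurntAt G r B (m+1) y}.ncard := by
  induction k with
  | zero => simp [run_zero, init]
  | succ k ih =>
    have hunion : {x | ∃ m < k + 1, ScansAt G r B m x y ∧ ¬ BurntAt G r B (m+1) y} =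
        {x | ∃ m < k, ScansAt G r B m x y ∧ ¬ BurntAt G r B (m+1) y} ∪
          {x | ScansAt G r B k x y ∧ ¬ BurntAt G r B (k+1) y} := by
      ext x
      simp only [Set.mem_ofPred_eq, Set.mem_union, Nat.lt_succ_iff_lt_or_eq, or_and_right,
        exists_or, exists_eq_left]
    have hdisj : Disjoint {x | ∃ m < k, ScansAt G r B m x y ∧ ¬ BurntAt G r B (m+1) y}
        {x | ScansAt G r B k x y ∧ ¬ BurntAt G r B (k+1) y} := by
      refine Set.disjoint_left.mpr fun x ⟨m, hm, hscan, _⟩ ⟨hscan', _⟩ => ?_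
      exact hm.ne (hscan.unique hscan')
    rw [count_run_succ, ih, hunion, Set.ncard_union_eq hdisj]

lemma count_final (y : Fin (n+1)) :
    (final G r B).count y = {x | CountingScan G r B x y}.ncard := by
  rw [final, count_run]
  congr 1
  ext x
  exact ⟨fun ⟨m, _, h⟩ => ⟨m, h⟩, fun ⟨m, h⟩ => ⟨m, h.1.lt_stopTime, h⟩⟩

lemma burnsAt_iff_rule (hs : ScansAt G r B k x j) (hj : ¬ BurntAt G r B k j) :
    BurnsAt G r B k j ↔ B x j ((run G r B k).count j) := by
  obtain ⟨rest, js, hst, htd⟩ := scansAt_iff.mp hs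
  refine ⟨fun h => ?_, fun h => burnsAt_iff.mpr ⟨x, rest, js, hst, htd, hj, h⟩⟩
  obtain ⟨x', rest', js', hst', -, -, hB⟩ := burnsAt_iff.mp h
  rwa [List.head_eq_of_cons_eq (hst.symm.trans hst')]

lemma count_run_succ_of_scansAt (hs : ScansAt G r B k x j) (hj : ¬ BurntAt G r B (k+1) j) :
    (run G r B (k+1)).count j = (run G r B k).count j + 1 := by
  have : {x' | ScansAt G r B k x' j ∧ ¬ BurntAt G r B (k+1) j} = {x} := by
    ext x'
    exact ⟨fun h => h.1.left_unique hs, fun h => ⟨h ▸ hs, hj⟩⟩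
  rw [count_run_succ, this, Set.ncard_singleton]

lemma count_run_succ_of_not_scansAt (h : ∀ x, ScansAt G r B k x j → BurntAt G r B (k+1) j) :
    (run G r B (k+1)).count j = (run G r B k).count j := by
  have : {x' | ScansAt G r B k x' j ∧ ¬ BurntAt G r B (k+1) j} = ∅ :=
    Set.eq_empty_of_forall_notMem fun x hx => hx.2 (h x hx.1)
  rw [count_run_succ, this, Set.ncard_empty, add_zero]

end Counters

def forwardDarts : Set (Fin (n+1) × Fin (n+1)) :=
  {p | G.Adj p.1 p.2 ∧ burnTime G r B p.1 < burnTime G r B p.2}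

def earlyScans : Set (Fin (n+1) × Fin (n+1)) :=
  {p | ∃ k, ScansAt G r B k p.1 p.2 ∧ ¬ BurntAt G r B k p.2}

def lateScans : Set (Fin (n+1) × Fin (n+1)) :=
  {p | ∃ k, ScansAt G r B k p.1 p.2 ∧ BurntAt G r B k p.2}

def treeDarts : Set (Fin (n+1) × Fin (n+1)) :=
  {p | G.Adj p.1 p.2 ∧ (final G r B).parent p.2 = p.1}

def countingScans : Set (Fin (n+1) × Fin (n+1)) := {p | CountingScan G r B p.1 p.2}

section Identity

variable {G r B}

lemma disjoint_earlyScans_lateScans : Disjoint (earlyScans G r B) (lateScans G r B) :=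
  Set.disjoint_left.mpr fun _ ⟨_, hk, hy⟩ ⟨_, hm, hy'⟩ => hy (hk.unique hm ▸ hy')

lemma ncard_countingScans : (countingScans G r B).ncard = degPF r (final G r B).count := by
  rw [countingScans, ncard_prod_setOf, degPF, Finset.sum_erase _ final_count_root]
  exact Finset.sum_congr rfl fun y _ => (count_final y).symm

section Completed

variable (hB : BurnsAll G r B)
include hB

lemma exists_scansAt_of_adj {x y : Fin (n+1)} (h : G.Adj x y) : ∃ k, ScansAt G r B k x y :=
  (exists_scansAt_of_scanned (scanned_final (hB x) h)).imp fun _ h => h.2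

lemma earlyScans_subset_forwardDarts : earlyScans G r B ⊆ forwardDarts G r B := by
  rintro ⟨x, y⟩ ⟨k, hk, hy⟩
  refine ⟨hk.adj, (burnTime_le hk.burntAt).trans_lt ?_⟩
  exact not_le.mp fun h => hy ((burntAt_iff_burnTime_le (hB y)).mpr h)

lemma forwardDarts_eq :
    forwardDarts G r B = earlyScans G r B ∪ (lateScans G r B ∩ forwardDarts G r B) := by
  refine (Set.union_subset (earlyScans_subset_forwardDarts hB) Set.inter_subset_right).antisymm' ?_
  rintro ⟨x, y⟩ hp
  obtain ⟨k, hk⟩ := exists_scansAt_of_adj hB hp.1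
  by_cases hy : BurntAt G r B k y
  · exact Or.inr ⟨⟨k, hk, hy⟩, hp⟩
  · exact Or.inl ⟨k, hk, hy⟩

lemma earlyScans_eq : earlyScans G r B = treeDarts G r B ∪ countingScans G r B := by
  ext ⟨x, y⟩
  constructor
  · rintro ⟨k, hk, hy⟩
    by_cases hy' : BurntAt G r B (k+1) y
    · exact Or.inl ⟨hk.adj, (hk.left_unique (BurnsAt.scansAt ⟨hy, hy'⟩)).symm⟩
    · exact Or.inr ⟨k, hk, hy'⟩
  · rintro (⟨hadj, hxy⟩ | ⟨m, hm, hy⟩)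
    · obtain ⟨k, hk⟩ := exists_scansAt_of_adj hB hadj
      have hyr := ne_root_of_adj_final_parent (hxy ▸ hadj)
      exact ⟨k, hk, (burnsAt_of_scansAt_final_parent hB hyr (hxy ▸ hk)).1⟩
    · exact ⟨m, hm, fun h => hy (h.mono m.le_succ)⟩

lemma disjoint_treeDarts_countingScans : Disjoint (treeDarts G r B) (countingScans G r B) := by
  refine Set.disjoint_left.mpr ?_
  rintro ⟨x, y⟩ ⟨hadj, hxy⟩ ⟨m, hm, hy⟩
  have hyr := ne_root_of_adj_final_parent (hxy ▸ hadj)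
  exact hy (burnsAt_of_scansAt_final_parent hB hyr (hxy ▸ hm)).2

lemma ncard_treeDarts : (treeDarts G r B).ncard = n := by
  have himage : treeDarts G r B = (fun v => ((final G r B).parent v, v)) '' {v | v ≠ r} := by
    ext ⟨x, y⟩
    constructor
    · rintro ⟨hadj, hxy⟩
      exact ⟨y, ne_root_of_adj_final_parent (hxy ▸ hadj), Prod.ext hxy rfl⟩
    · rintro ⟨v, hvr, hv⟩
      simp only [Prod.mk.injEq] at hv
      obtain ⟨rfl, rfl⟩ := hv
      exact ⟨adj_final_parent (hB v) hvr, rfl⟩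
  rw [himage, Set.ncard_image_of_injective _ fun v w h => (Prod.mk.inj h).2]
  simp [Set.ncard_eq_toFinset_card', Finset.filter_ne']

lemma ncard_lateScans_inter_forwardDarts :
    (lateScans G r B ∩ forwardDarts G r B).ncard = kappaNum G r (final G r B).parent := by
  have himage : lateScans G r B ∩ forwardDarts G r B =
      (fun q : Fin (n+1) × Fin (n+1) => ((final G r B).parent q.1, q.2)) ''
        {q | IsKappaInversion G r (final G r B).parent q.1 q.2} := by
    ext ⟨x, y⟩
    constructor
    · rintro ⟨⟨k, hk, hy⟩, -, hxy⟩
      obtain ⟨c, hki, rfl⟩ := exists_kappaInversion_of_late_scan hB hk hy hxy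
      exact ⟨(c, y), hki, rfl⟩
    · rintro ⟨⟨c, y⟩, hki, he⟩
      simp only [Prod.mk.injEq] at he
      obtain ⟨rfl, rfl⟩ := he
      obtain ⟨k, hk, hy, hxy⟩ := exists_late_scan_of_kappaInversion hB hki
      exact ⟨⟨k, hk, hy⟩, hk.adj, hxy⟩
  rw [himage, Set.InjOn.ncard_image, kappaNum]
  rintro ⟨c, y⟩ hc ⟨c', y'⟩ hc' he
  simp only [Prod.mk.injEq] at he
  obtain ⟨he, rfl⟩ := he
  congr
  exact eq_of_parent_eq_of_isAncestor final_parent_root (fun _ => not_isAncestor_self hB)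
    hc.1 hc'.1 hc.2.2.1 hc'.2.2.1 he

lemma kappaNum_add_degPF_add_eq_ncard_edgeSet :
    kappaNum G r (final G r B).parent + degPF r (final G r B).count + n = G.edgeSet.ncard := by
  have hforward : (forwardDarts G r B).ncard = G.edgeSet.ncard :=
    ncard_setOf_adj_lt G (burnTime_injective hB)
  rw [forwardDarts_eq hB, Set.ncard_union_eq (disjoint_earlyScans_lateScans.mono_right
      Set.inter_subset_left), earlyScans_eq hB,
    Set.ncard_union_eq (disjoint_treeDarts_countingScans hB), ncard_treeDarts hB,
    ncard_countingScans, ncard_lateScans_inter_forwardDarts hB] at hforward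
  omega

lemma isParkingFunction_final_count :
    IsParkingFunction G r (final G r B).count := by
  intro S hS hrS
  obtain ⟨j, hjS, hjmin⟩ := S.exists_min_image (burnTime G r B) hS
  refine ⟨j, hjS, ?_⟩
  have hjr : j ≠ r := fun h => hrS (h ▸ hjS)
  -- all these neighbours of `j` are burnt before `j`, so they lie outside `S`
  have hsub : insert ((final G r B).parent j) {x | CountingScan G r B x j} ⊆
      {x | G.Adj j x ∧ x ∉ S} := by
    rintro x (rfl | ⟨m, hm, hj⟩)
    · exact ⟨(adj_final_parent (hB j) hjr).symm,
        fun hx => (hjmin _ hx).not_gt (burnTime_final_parent_lt hB hjr)⟩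
    · refine ⟨hm.adj.symm, fun hx => (hjmin _ hx).not_gt ?_⟩
      refine (burnTime_le hm.burntAt).trans_lt ?_
      exact not_le.mp fun h => hj ((burntAt_iff_burnTime_le (hB j)).mpr (h.trans m.le_succ))
  have hnotmem : (final G r B).parent j ∉ {x | CountingScan G r B x j} :=
    fun ⟨_, hm, hj⟩ => hj (burnsAt_of_scansAt_final_parent hB hjr hm).2
  have := Set.ncard_le_ncard hsub
  rwa [Set.ncard_insert_of_notMem hnotmem, ← count_final] at this

end Completed

end Identity

section Rules

variable {G r}

lemma step_congr {B B' : Rule n} {s : State n}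
    (h : ∀ i rest j js, s.stack = i :: rest → s.todo i = j :: js → j ∉ s.burnt →
      (B i j (s.count j) ↔ B' i j (s.count j))) :
    step B s = step B' s := by
  refine step_cases B s ?_ ?_ ?_ ?_ ?_
  · intro hst he; rw [he, step_of_stack_eq_nil hst]
  · intro i rest hst htd he; rw [he, step_pop hst htd]
  · intro i rest j js hst htd hj he; rw [he, step_skip hst htd hj]
  · intro i rest j js hst htd hj hB he
    rw [he, step_burn hst htd hj ((h i rest j js hst htd hj).mp hB)]
  · intro i rest j js hst htd hj hB he
    rw [he, step_count hst htd hj (mt (h i rest j js hst htd hj).mpr hB)]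

lemma run_eq_of_rule_iff {B B' : Rule n}
    (h : ∀ k x j, ScansAt G r B k x j → ¬ BurntAt G r B k j →
      (B x j ((run G r B k).count j) ↔ B' x j ((run G r B k).count j))) :
    run G r B' = run G r B := by
  funext k
  induction k with
  | zero => rfl
  | succ k ih =>
    rw [run_succ, run_succ, ih]
    refine (step_congr fun i rest j js hst htd hj => ?_).symm
    exact h k i j (scansAt_iff.mpr ⟨rest, js, hst, htd⟩) hj

def treeRule (T : RootedSpanningTree G r) : Rule n := fun i j _ => T.parent j = i

def parkingRule (P : Fin (n+1) → ℕ) : Rule n := fun _ j c => c = P j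

lemma burnsAll_treeRule (T : RootedSpanningTree G r) : BurnsAll G r (treeRule T) := by
  intro v
  obtain ⟨k, hk⟩ := T.reaches_root v
  induction k generalizing v with
  | zero =>
    rw [iterate_zero_apply] at hk
    rw [hk]
    exact burntAt_root _
  | succ k ih =>
    by_cases hvr : v = r
    · rw [hvr]
      exact burntAt_root _
    have hp := ih (T.parent v) hk
    obtain ⟨m, hm, hscan⟩ := exists_scansAt_of_scanned (scanned_final hp (T.adj_parent v hvr))
    by_cases hv : BurntAt G r (treeRule T) m v
    · exact hv.mono hm.le
    · exact ((burnsAt_iff_rule hscan hv).mpr rfl).2.mono hm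

lemma final_parent_treeRule (T : RootedSpanningTree G r) :
    (final G r (treeRule T)).parent = T.parent := by
  funext v
  by_cases hvr : v = r
  · rw [hvr, final_parent_root, T.parent_root]
  · obtain ⟨k, -, hburn⟩ := exists_burnsAt (burnsAll_treeRule T v) hvr
    obtain ⟨-, -, -, -, hrule⟩ := hburn.exists_final
    exact hrule.symm

noncomputable def parkingOfTree (T : RootedSpanningTree G r) : Fin (n+1) → ℕ :=
  (final G r (treeRule T)).count

lemma isParkingFunction_parkingOfTree (T : RootedSpanningTree G r) :
    IsParkingFunction G r (parkingOfTree T) :=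
  isParkingFunction_final_count (burnsAll_treeRule T)

lemma kappaNum_add_degPF_parkingOfTree (T : RootedSpanningTree G r) :
    kappaNum G r T.parent + degPF r (parkingOfTree T) + n = G.edgeSet.ncard := by
  rw [← final_parent_treeRule T]
  exact kappaNum_add_degPF_add_eq_ncard_edgeSet (burnsAll_treeRule T)

lemma run_parkingRule_parkingOfTree (T : RootedSpanningTree G r) :
    run G r (parkingRule (parkingOfTree T)) = run G r (treeRule T) := by
  refine run_eq_of_rule_iff fun k x j hscan hj => ⟨fun h => ?_, fun h => ?_⟩
  · exact (((burnsAt_iff_rule hscan hj).mpr h).count_final).symm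
  · by_contra hxj
    have hj' : ¬ BurntAt G r (treeRule T) (k+1) j := fun h' =>
      hxj ((burnsAt_iff_rule hscan hj).mp ⟨hj, h'⟩)
    have := count_run_le (G := G) (r := r) (B := treeRule T) hscan.lt_stopTime j
    rw [count_run_succ_of_scansAt hscan hj'] at this
    have h' : (run G r (treeRule T) k).count j = (run G r (treeRule T) (stopTime G r)).count j := h
    omega

lemma parkingOfTree_injective : Injective (parkingOfTree (G := G) (r := r)) := by
  intro T T' h
  refine RootedSpanningTree.ext ?_
  rw [← final_parent_treeRule T, ← final_parent_treeRule T', final, final,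
    ← run_parkingRule_parkingOfTree T, ← run_parkingRule_parkingOfTree T', h]

section ParkingFunction

variable {P : Fin (n+1) → ℕ}

lemma count_run_le_of_not_burntAt {k : ℕ} {j : Fin (n+1)}
    (hj : ¬ BurntAt G r (parkingRule P) k j) : (run G r (parkingRule P) k).count j ≤ P j := by
  induction k with
  | zero => simp [run_zero, init]
  | succ k ih =>
    have hjk : ¬ BurntAt G r (parkingRule P) k j := fun h => hj (h.mono k.le_succ)
    by_cases hscan : ∃ x, ScansAt G r (parkingRule P) k x j
    · obtain ⟨x, hx⟩ := hscan
      have hne : (run G r (parkingRule P) k).count j ≠ P j := fun h =>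
        hj ((burnsAt_iff_rule hx hjk).mpr h).2
      rw [count_run_succ_of_scansAt hx hj]
      exact Nat.succ_le_of_lt ((ih hjk).lt_of_ne hne)
    · rw [count_run_succ_of_not_scansAt fun x hx => absurd ⟨x, hx⟩ hscan]
      exact ih hjk

lemma burnsAll_parkingRule (hP : IsParkingFunction G r P) : BurnsAll G r (parkingRule P) := by
  classical
  by_contra hall
  obtain ⟨v, hv⟩ := not_forall.mp hall
  set S := Finset.univ.filter fun w => ¬ BurntAt G r (parkingRule P) (stopTime G r) w
  obtain ⟨i, hiS, hi⟩ := hP S ⟨v, by simp [S, hv]⟩ (by simp [S, burntAt_root])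
  have hiB : ¬ BurntAt G r (parkingRule P) (stopTime G r) i := by simpa [S] using hiS
  -- every burnt neighbour of the unburnt vertex `i` raised its counter
  have hsub : {x | G.Adj i x ∧ x ∉ S} ⊆ {x | CountingScan G r (parkingRule P) x i} := by
    rintro x ⟨hadj, hxS⟩
    have hxB : BurntAt G r (parkingRule P) (stopTime G r) x := by simpa [S] using hxS
    obtain ⟨m, hm, hscan⟩ := exists_scansAt_of_scanned (scanned_final hxB hadj.symm)
    exact ⟨m, hscan, fun h => hiB (h.mono hm)⟩
  have h1 := Set.ncard_le_ncard hsub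
  rw [← count_final] at h1
  have h2 := count_run_le_of_not_burntAt hiB
  exact absurd hi (not_lt.mpr (h1.trans h2))

lemma run_treeRule_tree (hP : IsParkingFunction G r P) :
    run G r (treeRule (tree (burnsAll_parkingRule hP))) = run G r (parkingRule P) := by
  have hB := burnsAll_parkingRule hP
  refine run_eq_of_rule_iff fun k x j hscan hj => ⟨fun h => ?_, fun h => ?_⟩
  · exact hscan.left_unique ((burnsAt_iff_rule hscan hj).mpr h).scansAt |>.symm
  · have hjr : j ≠ r := fun h => hj (h ▸ burntAt_root k)
    have hxj : (final G r (parkingRule P)).parent j = x := h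
    exact (burnsAt_iff_rule hscan hj).mp (burnsAt_of_scansAt_final_parent hB hjr (hxj ▸ hscan))

lemma parkingOfTree_tree (hP : IsParkingFunction G r P) (hPr : P r = 0) :
    parkingOfTree (tree (burnsAll_parkingRule hP)) = P := by
  rw [parkingOfTree, final, run_treeRule_tree hP]
  funext v
  by_cases hvr : v = r
  · rw [hvr, hPr]
    exact final_count_root
  · obtain ⟨k, -, hburn⟩ := exists_burnsAt (burnsAll_parkingRule hP v) hvr
    obtain ⟨-, -, -, -, hrule⟩ := hburn.exists_final
    exact hburn.count_final.trans hrule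

end ParkingFunction

end Rules

end PFG.Burning

open PFG.Burning in
theorem card_parking_functions_eq_card_trees_general {n : ℕ}
    (G : SimpleGraph (Fin (n+1))) (r : Fin (n+1)) (d : ℕ) :
    Set.ncard {P : Fin (n+1) → ℕ |
        P r = 0 ∧ PFG.IsParkingFunction G r P ∧ PFG.degPF r P = d} =
      Set.ncard {T : PFG.RootedSpanningTree G r |
        PFG.kappaNum G r T.parent + d + (n + 1) = G.edgeSet.ncard + 1} := by
  have himage :
      {P : Fin (n+1) → ℕ | P r = 0 ∧ PFG.IsParkingFunction G r P ∧ PFG.degPF r P = d} =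
      parkingOfTree '' {T : PFG.RootedSpanningTree G r |
        PFG.kappaNum G r T.parent + d + (n + 1) = G.edgeSet.ncard + 1} := by
    ext P
    constructor
    · rintro ⟨hPr, hP, rfl⟩
      refine ⟨tree (burnsAll_parkingRule hP), ?_, parkingOfTree_tree hP hPr⟩
      have := kappaNum_add_degPF_parkingOfTree (tree (burnsAll_parkingRule hP))
      rw [parkingOfTree_tree hP hPr] at this
      simp only [Set.mem_ofPred_eq]
      omega
    · rintro ⟨T, hT, rfl⟩
      have := kappaNum_add_degPF_parkingOfTree T
      simp only [Set.mem_ofPred_eq] at hT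
      exact ⟨final_count_root, isParkingFunction_parkingOfTree T, by omega⟩
  rw [himage, parkingOfTree_injective.injOn.ncard_image]

/-- For each `d`, the number of parking functions of `G` of degree `d` equals
the number of spanning trees `T` of `G` rooted at `r` with `κ(G,T) = g - d`,
where `g = |E| - |V| + 1` (the κ-condition is stated additively). -/
theorem card_parking_functions_eq_card_trees {n : ℕ}
    (G : SimpleGraph (Fin (n+1))) (hG : G.Connected) (r : Fin (n+1)) (d : ℕ) :
    Set.ncard {P : Fin (n+1) → ℕ |
        P r = 0 ∧ PFG.IsParkingFunction G r P ∧ PFG.degPF r P = d} =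
      Set.ncard {T : PFG.RootedSpanningTree G r |
        PFG.kappaNum G r T.parent + d + (n + 1) = G.edgeSet.ncard + 1} :=
  card_parking_functions_eq_card_trees_general G r d
end

section
/- For any connected threshold graph G labeled by reverse degree sequence and any spanning tree T of G rooted at vertex 0, every inversion of T is a κ-inversion. -/
open Finset

namespace PFG

/-- `G` is a threshold graph: it can be built from a single vertex by
successively adding dominating vertices (adjacent to every earlier vertex) or
isolated vertices (adjacent to no earlier vertex).  Here `e` enumerates the
vertices in order of addition, and `b k = true` iff the `k`-th vertex was
added as a dominating vertex. -/
def IsThresholdGraph {V : Type*} (G : SimpleGraph V) : Prop :=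
  ∃ (m : ℕ) (e : Fin m ≃ V) (b : Fin m → Bool),
    ∀ i j : Fin m, i < j → (G.Adj (e i) (e j) ↔ b j = true)

/-- The degree of a vertex. -/
noncomputable def vdeg {V : Type*} (G : SimpleGraph V) (v : V) : ℕ :=
  Set.ncard {w | G.Adj v w}

end PFG

/-!
Threshold graphs have nested neighbourhoods: for any two vertices `b`, `c`, either
`N(b) \ {c} ⊆ N(c) \ {b}` or the reverse. Otherwise there are edges `b–a`, `c–w` and non-edges
`b–w`, `c–a`; the last-added of these four vertices lies on one of the edges and on one of the
non-edges, although it is adjacent either to all or to none of the vertices added before it. Comparing cardinalities, if `deg b ≤ deg c` then every neighbour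
`a ≠ c` of `b` is a neighbour of `c`. For an inversion `(i, j)` of the tree, take `b = i`, `c = j`
(so `deg i ≤ deg j` by the labeling) and `a` the parent of `i`, which is not `j` since a rooted
tree has no cycles.
-/

namespace PFG

section Threshold

variable {V : Type*} {G : SimpleGraph V}

theorem IsThresholdGraph.exists_adj_iff_sup (hG : IsThresholdGraph G) :
    ∃ (m : ℕ) (e : Fin m ≃ V) (b : Fin m → Bool),
      ∀ x y, x ≠ y → (G.Adj x y ↔ b (e.symm x ⊔ e.symm y) = true) := by
  obtain ⟨m, e, b, hb⟩ := hG
  refine ⟨m, e, b, fun x y hxy => ?_⟩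
  rcases lt_or_gt_of_ne (e.symm.injective.ne hxy) with h | h
  · simpa [sup_eq_right.mpr h.le] using hb _ _ h
  · simpa [sup_eq_left.mpr h.le, G.adj_comm x y] using hb _ _ h

theorem IsThresholdGraph.adj_or_adj {u v w z : V} (hG : IsThresholdGraph G)
    (huz : G.Adj u z) (hvw : G.Adj v w) (huw : u ≠ w) (hvz : v ≠ z) :
    G.Adj u w ∨ G.Adj v z := by
  obtain ⟨m, e, b, hb⟩ := hG.exists_adj_iff_sup
  set f : V → V → Fin m := fun x y => e.symm x ⊔ e.symm y
  have hsup : f u z ⊔ f v w = f u w ⊔ f v z := by simp only [f]; ac_rfl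
  have hlatest : b (f u w ⊔ f v z) = true := by
    rw [← hsup]
    rcases le_total (f u z) (f v w) with h | h
    · rw [sup_eq_right.mpr h]; exact (hb _ _ hvw.ne).mp hvw
    · rw [sup_eq_left.mpr h]; exact (hb _ _ huz.ne).mp huz
  rcases le_total (f u w) (f v z) with h | h
  · rw [sup_eq_right.mpr h] at hlatest; exact .inr ((hb _ _ hvz).mpr hlatest)
  · rw [sup_eq_left.mpr h] at hlatest; exact .inl ((hb _ _ huw).mpr hlatest)

theorem IsThresholdGraph.neighborSet_sdiff_subset_total (hG : IsThresholdGraph G) (b c : V) :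
    G.neighborSet b \ {c} ⊆ G.neighborSet c \ {b} ∨
      G.neighborSet c \ {b} ⊆ G.neighborSet b \ {c} := by
  by_contra! h
  obtain ⟨⟨a, hab, hac⟩, ⟨w, hcw, hbw⟩⟩ := And.intro (Set.not_subset.mp h.1) (Set.not_subset.mp h.2)
  simp only [Set.mem_sdiff, SimpleGraph.mem_neighborSet, Set.mem_singleton_iff, not_and,
    not_not] at hab hac hcw hbw
  rcases hG.adj_or_adj hab.1 hcw.1 (Ne.symm hcw.2) (Ne.symm hab.2) with hbw' | hca
  · exact hcw.1.ne (hbw hbw').symm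
  · exact hab.1.ne (hac hca).symm

theorem IsThresholdGraph.adj_of_vdeg_le [Finite V] (hG : IsThresholdGraph G) {a b c : V}
    (hab : G.Adj a b) (hac : a ≠ c) (hdeg : vdeg G b ≤ vdeg G c) : G.Adj a c := by
  rcases hG.neighborSet_sdiff_subset_total b c with hsub | hsub
  · exact (hsub ⟨hab.symm, hac⟩).1.symm
  by_contra hac'
  have hlt : (G.neighborSet c \ {b}).ncard < (G.neighborSet b \ {c}).ncard :=
    Set.ncard_lt_ncard <|
      (Set.ssubset_iff_of_subset hsub).mpr ⟨a, ⟨hab.symm, hac⟩, fun h => hac' h.1.symm⟩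
  change (G.neighborSet b).ncard ≤ (G.neighborSet c).ncard at hdeg
  by_cases hbc : G.Adj b c
  · rw [← Set.ncard_sdiff_singleton_add_one (s := G.neighborSet b) hbc,
      ← Set.ncard_sdiff_singleton_add_one (s := G.neighborSet c) hbc.symm] at hdeg
    omega
  · rw [Set.sdiff_singleton_eq_self (s := G.neighborSet b) hbc,
      Set.sdiff_singleton_eq_self (s := G.neighborSet c) (mt G.adj_symm hbc)] at hlt
    omega

end Threshold

theorem RootedSpanningTree.not_isPeriodicPt {n : ℕ} {G : SimpleGraph (Fin (n+1))} {r : Fin (n+1)}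
    (T : RootedSpanningTree G r) {v : Fin (n+1)} (hv : v ≠ r) {k : ℕ} (hk : 0 < k) :
    ¬ Function.IsPeriodicPt T.parent k v := by
  intro hper
  obtain ⟨k, rfl⟩ := Nat.exists_eq_add_one_of_ne_zero hk.ne'
  obtain ⟨K, hK⟩ := T.reaches_root v
  -- Going around the cycle `K` times returns to `v`, but passes through the root after `K` steps.
  have hroot : T.parent^[(k + 1) * K] v = r := by
    rw [add_one_mul, Function.iterate_add_apply, hK]
    exact Function.iterate_fixed T.parent_root _
  exact hv ((hper.mul_const K).eq.symm.trans hroot)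

theorem RootedSpanningTree.not_isAncestor_parent {n : ℕ} {G : SimpleGraph (Fin (n+1))}
    {r : Fin (n+1)} (T : RootedSpanningTree G r) {v : Fin (n+1)} (hv : v ≠ r) :
    ¬ IsAncestor T.parent v (T.parent v) := fun ⟨k, _, hk⟩ =>
  T.not_isPeriodicPt hv k.succ_pos (by rw [Function.IsPeriodicPt, Function.IsFixedPt,
    Function.iterate_succ_apply, hk])

end PFG

theorem threshold_inversion_is_kappa_inversion_general {n : ℕ}
    (G : SimpleGraph (Fin (n+1)))
    (hthr : PFG.IsThresholdGraph G)
    (hlab : ∀ i j : Fin (n+1), i ≤ j → PFG.vdeg G j ≤ PFG.vdeg G i)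
    (T : PFG.RootedSpanningTree G 0) (i j : Fin (n+1))
    (hinv : PFG.IsInversion T.parent i j) :
    PFG.IsKappaInversion G 0 T.parent i j := by
  obtain ⟨hanc, hji⟩ := hinv
  have hi : i ≠ 0 := (Fin.zero_le j).trans_lt hji |>.ne'
  have hpj : T.parent i ≠ j := by
    rintro rfl
    exact T.not_isAncestor_parent hi hanc
  exact ⟨hanc, hji, hi, hthr.adj_of_vdeg_le (T.adj_parent i hi) hpj (hlab j i hji.le)⟩

/-- In a connected threshold graph labeled by reverse degree sequence, every
inversion of a spanning tree rooted at `0` is a κ-inversion. -/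
theorem threshold_inversion_is_kappa_inversion {n : ℕ}
    (G : SimpleGraph (Fin (n+1))) (hG : G.Connected)
    (hthr : PFG.IsThresholdGraph G)
    (hlab : ∀ i j : Fin (n+1), i ≤ j → PFG.vdeg G j ≤ PFG.vdeg G i)
    (T : PFG.RootedSpanningTree G 0) (i j : Fin (n+1))
    (hinv : PFG.IsInversion T.parent i j) :
    PFG.IsKappaInversion G 0 T.parent i j :=
  threshold_inversion_is_kappa_inversion_general G hthr hlab T i j hinv
end

section
/- Let n ≥ 1 and consider the complete graph K_{n+1} on vertices {0,...,n} with root 0. A function P : {1,...,n} → ℕ is a parking function for K_{n+1} if and only if, when the values P(1),...,P(n) are sorted into nondecreasing order b_1 ≤ b_2 ≤ ... ≤ b_n, we have b_i ≤ i - 1 for all i. -/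
/-!
On `K_{n+1}` every `i ∈ S` has `deg_{Sᶜ}(i) = n + 1 - |S|`, so `P` fails on `S` exactly when all
its values on `S` are at least `n + 1 - |S|`. Taking `S = {v ≠ r | t ≤ P v}` shows that `P` is a
parking function iff, for every `t`, at most `n - t` non-root vertices have value `≥ t`. For the
sorted list `b` of values this count condition says `b[i] ≤ i` (0-indexed): entries `≥ t` sit at
indices `≥ t`, and conversely if `b[i] > i` then the `n - i` entries from index `i` on are all
`≥ i + 1`.
-/

open Finset

namespace PFG

variable {n : ℕ}

lemma sDeg_top_of_mem {S : Finset (Fin (n+1))} {v : Fin (n+1)} (hv : v ∈ S) :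
    sDeg (⊤ : SimpleGraph (Fin (n+1))) S v = n + 1 - #S := by
  have hcompl : {j : Fin (n+1) | (⊤ : SimpleGraph (Fin (n+1))).Adj v j ∧ j ∉ S} = ↑Sᶜ := by
    ext j
    simp only [SimpleGraph.top_adj, Set.mem_ofPred_eq, coe_compl, Set.mem_compl_iff, mem_coe]
    exact ⟨And.right, fun hj => ⟨fun h => hj (h ▸ hv), hj⟩⟩
  rw [sDeg, hcompl, Set.ncard_coe_finset, card_compl, Fintype.card_fin]

theorem isParkingFunction_top_iff (r : Fin (n+1)) (P : Fin (n+1) → ℕ) :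
    IsParkingFunction (⊤ : SimpleGraph (Fin (n+1))) r P ↔
      ∀ t, #{v ∈ univ.erase r | t ≤ P v} ≤ n - t := by
  constructor
  · intro hP t
    set S := {v ∈ univ.erase r | t ≤ P v}
    rcases S.eq_empty_or_nonempty with hS | hS
    · simp [hS]
    obtain ⟨v, hvS, hv⟩ := hP S hS (by simp [S])
    rw [sDeg_top_of_mem hvS] at hv
    have htv : t ≤ P v := (mem_filter.1 hvS).2
    omega
  · intro hcount S hS hrS
    by_contra! hall
    have hsub : S ⊆ {v ∈ univ.erase r | n + 1 - #S ≤ P v} := fun v hv =>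
      mem_filter.2 ⟨mem_erase.2 ⟨fun h => hrS (h ▸ hv), mem_univ v⟩,
        sDeg_top_of_mem hv ▸ hall v hv⟩
    have hle := (card_le_card hsub).trans (hcount (n + 1 - #S))
    have hSle : #S ≤ n + 1 := (card_le_univ S).trans_eq (Fintype.card_fin _)
    have hSpos : 0 < #S := hS.card_pos
    omega

end PFG

namespace List

theorem forall_getElem_le_iff_countP_le {L : List ℕ} (hL : L.Pairwise (· ≤ ·)) :
    (∀ i (h : i < L.length), L[i] ≤ i) ↔ ∀ t, L.countP (t ≤ ·) ≤ L.length - t := by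
  constructor
  · intro hle t
    have htake : (L.take t).countP (t ≤ ·) = 0 := by
      rw [countP_eq_zero]
      intro x hx
      obtain ⟨j, hj, rfl⟩ := getElem_of_mem hx
      rw [length_take] at hj
      rw [getElem_take]
      have hj_le := hle j (by omega)
      simp only [decide_eq_true_eq]
      omega
    calc L.countP (t ≤ ·)
        = (L.take t).countP (t ≤ ·) + (L.drop t).countP (t ≤ ·) := by
          rw [← countP_append, take_append_drop]
      _ ≤ L.length - t := by
          rw [htake, zero_add, ← length_drop]
          exact countP_le_length
  · intro hcount i hi
    by_contra! hlt
    have hdrop : (L.drop i).countP (i + 1 ≤ ·) = L.length - i := by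
      rw [← length_drop, countP_eq_length]
      intro x hx
      obtain ⟨j, hj, rfl⟩ := getElem_of_mem hx
      rw [length_drop] at hj
      rw [getElem_drop]
      have hmono := hL.rel_get_of_le (a := ⟨i, hi⟩) (b := ⟨i + j, by omega⟩) (by simp)
      simp only [get_eq_getElem, decide_eq_true_eq] at hmono ⊢
      omega
    have hsub := (drop_sublist i L).countP_le (p := (i + 1 ≤ ·))
    have hbound := hcount (i + 1)
    omega

end List

theorem complete_parking_function_iff_sorted_general {n : ℕ}
    (P : Fin (n+1) → ℕ) :
    PFG.IsParkingFunction (⊤ : SimpleGraph (Fin (n+1))) 0 P ↔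
      ∀ (i : ℕ)
        (h : i < (Multiset.sort
          (((Finset.univ.erase (0 : Fin (n+1))).val).map P) (· ≤ ·)).length),
        (Multiset.sort
          (((Finset.univ.erase (0 : Fin (n+1))).val).map P) (· ≤ ·)).get ⟨i, h⟩ ≤ i := by
  set m := ((Finset.univ.erase (0 : Fin (n+1))).val).map P
  have hlength : (m.sort (· ≤ ·)).length = n := by simp [m, Multiset.length_sort]
  have hcountP (t : ℕ) :
      (m.sort (· ≤ ·)).countP (t ≤ ·) = #{v ∈ univ.erase 0 | t ≤ P v} := by
    rw [← Multiset.coe_countP, Multiset.sort_eq, Multiset.countP_map]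
    rfl
  simp only [List.get_eq_getElem]
  rw [List.forall_getElem_le_iff_countP_le (Multiset.pairwise_sort _ _),
    PFG.isParkingFunction_top_iff, hlength]
  simp only [hcountP]

/-- Classical characterization: `P` is a parking function for the complete
graph `K_{n+1}` on `{0,…,n}` with root `0` iff, when its values on `{1,…,n}`
are sorted into nondecreasing order `b₁ ≤ … ≤ b_n`, we have `bᵢ ≤ i - 1`. -/
theorem complete_parking_function_iff_sorted {n : ℕ} (hn : 1 ≤ n)
    (P : Fin (n+1) → ℕ) :
    PFG.IsParkingFunction (⊤ : SimpleGraph (Fin (n+1))) 0 P ↔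
      ∀ (i : ℕ)
        (h : i < (Multiset.sort
          (((Finset.univ.erase (0 : Fin (n+1))).val).map P) (· ≤ ·)).length),
        (Multiset.sort
          (((Finset.univ.erase (0 : Fin (n+1))).val).map P) (· ≤ ·)).get ⟨i, h⟩ ≤ i :=
  complete_parking_function_iff_sorted_general P
end
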